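/- Let ξ=(ξ₁,ξ₂) take values in {-1,0,1}² with pmf μ, and write x₂=μ(-1,0), x̃₂=μ(0,-1), x₄=μ(0,1), x̃₄=μ(1,0), x₆=μ(1,-1), x̃₆=μ(-1,1). Then ξ is two-color exchangeable if and only if x₂+x̃₆ = x̃₂+x₆, x₂+x̃₄ = x̃₂+x₄, and x₄+x̃₆ = x̃₄+x₆. -/

import Mathlib

/-!
For a two-valued `f` and `a ≠ b`, adding `P(f ξ₁ = a, f ξ₂ = a)` to both
`P(f ξ₁ = a, f ξ₂ = b)` and `P(f ξ₁ = b, f ξ₂ = a)` gives the marginals `P(f ξ₁ = a)` and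
`P(f ξ₂ = a)`. So two-color exchangeability says exactly that `ξ₁` and `ξ₂` have the same law,
and after cancelling the diagonal term, the three conditions say `P(ξ₁ = z) = P(ξ₂ = z)`
for `z = -1, 0, 1`.
-/

open Finset

/-- Law of `(f ξ₁, f ξ₂)` when `(ξ₁, ξ₂)` has pmf `μ` on `{-1,0,1}²`. -/
noncomputable def pushPair (μ : ℤ × ℤ → ℝ) (f : ℤ → Fin 2) (a b : Fin 2) : ℝ :=
  ∑ x ∈ ({-1, 0, 1} : Finset ℤ), ∑ y ∈ ({-1, 0, 1} : Finset ℤ),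
    if f x = a ∧ f y = b then μ (x, y) else 0

section PairLaw

variable {α : Type*} (S : Finset α) (μ : α × α → ℝ)

noncomputable def pairLaw (f : α → Fin 2) (a b : Fin 2) : ℝ :=
  ∑ x ∈ S, ∑ y ∈ S, if f x = a ∧ f y = b then μ (x, y) else 0

def marginalFst (x : α) : ℝ := ∑ y ∈ S, μ (x, y)

def marginalSnd (y : α) : ℝ := ∑ x ∈ S, μ (x, y)

theorem sum_pairLaw_right (f : α → Fin 2) (a : Fin 2) :
    ∑ b, pairLaw S μ f a b = ∑ x ∈ S with f x = a, marginalFst S μ x := by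
  rw [sum_filter]
  unfold pairLaw marginalFst
  rw [sum_comm]
  refine sum_congr rfl fun x _ => ?_
  rw [sum_comm]
  split_ifs with hx <;> simp [hx]

theorem pairLaw_swap (f : α → Fin 2) (a b : Fin 2) :
    pairLaw S (fun p => μ p.swap) f a b = pairLaw S μ f b a := by
  unfold pairLaw
  rw [sum_comm]
  simp only [Prod.swap_prod_mk, and_comm]

theorem sum_pairLaw_left (f : α → Fin 2) (a : Fin 2) :
    ∑ b, pairLaw S μ f b a = ∑ y ∈ S with f y = a, marginalSnd S μ y := by
  simp only [← pairLaw_swap S μ f a]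
  exact sum_pairLaw_right S (fun p => μ p.swap) f a

theorem pairLaw_comm_iff {f : α → Fin 2} {a b : Fin 2} (hab : a ≠ b) :
    pairLaw S μ f a b = pairLaw S μ f b a ↔
      ∑ x ∈ S with f x = a, marginalFst S μ x = ∑ x ∈ S with f x = a, marginalSnd S μ x := by
  have huniv : (univ : Finset (Fin 2)) = {a, b} := by
    fin_cases a <;> fin_cases b <;> first | exact absurd rfl hab | decide
  rw [← sum_pairLaw_right, ← sum_pairLaw_left, huniv, sum_pair hab, sum_pair hab,
    add_comm _ (pairLaw S μ f b a)]
  constructor <;> intro h <;> linarith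

theorem forall_pairLaw_comm_iff [DecidableEq α] :
    (∀ f : α → Fin 2, ∀ a b, pairLaw S μ f a b = pairLaw S μ f b a) ↔
      ∀ z ∈ S, marginalFst S μ z = marginalSnd S μ z := by
  constructor
  · intro h z hz
    have := (pairLaw_comm_iff S μ (f := fun x => if x = z then 1 else 0) one_ne_zero).1 (h _ 1 0)
    simpa [filter_eq', hz] using this
  · intro h f a b
    by_cases hab : a = b
    · rw [hab]
    · exact (pairLaw_comm_iff S μ hab).2 (sum_congr rfl fun x hx => h x (mem_filter.1 hx).1)

end PairLaw

theorem stmt_4_general (μ : ℤ × ℤ → ℝ) :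
    (∀ f : ℤ → Fin 2, ∀ a b : Fin 2, pushPair μ f a b = pushPair μ f b a) ↔
      (μ (-1, 0) + μ (-1, 1) = μ (0, -1) + μ (1, -1) ∧
       μ (-1, 0) + μ (1, 0) = μ (0, -1) + μ (0, 1) ∧
       μ (0, 1) + μ (-1, 1) = μ (1, 0) + μ (1, -1)) := by
  change (∀ f a b, pairLaw {-1, 0, 1} μ f a b = pairLaw {-1, 0, 1} μ f b a) ↔ _
  rw [forall_pairLaw_comm_iff]
  have sum_three (g : ℤ → ℝ) : ∑ z ∈ ({-1, 0, 1} : Finset ℤ), g z = g (-1) + g 0 + g 1 := by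
    simp [add_assoc]
  simp only [mem_insert, mem_singleton, forall_eq_or_imp, forall_eq, marginalFst, marginalSnd,
    sum_three]
  refine and_congr ?_ (and_congr ?_ ?_) <;> constructor <;> intro h <;> linarith

/-- A pmf of a pair with values in `{-1,0,1}` is two-color exchangeable iff the
three stated linear conditions on the off-diagonal probabilities hold, where
`x₂ = μ(-1,0)`, `x̃₂ = μ(0,-1)`, `x₄ = μ(0,1)`, `x̃₄ = μ(1,0)`,
`x₆ = μ(1,-1)`, `x̃₆ = μ(-1,1)`. -/
theorem stmt_4 (μ : ℤ × ℤ → ℝ)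
    (hnn : ∀ p, 0 ≤ μ p)
    (hsum : ∑ x ∈ ({-1, 0, 1} : Finset ℤ), ∑ y ∈ ({-1, 0, 1} : Finset ℤ), μ (x, y) = 1)
    (hsupp : ∀ x y : ℤ, x ∉ ({-1, 0, 1} : Finset ℤ) ∨ y ∉ ({-1, 0, 1} : Finset ℤ) →
      μ (x, y) = 0) :
    (∀ f : ℤ → Fin 2, ∀ a b : Fin 2, pushPair μ f a b = pushPair μ f b a) ↔
      (μ (-1, 0) + μ (-1, 1) = μ (0, -1) + μ (1, -1) ∧
       μ (-1, 0) + μ (1, 0) = μ (0, -1) + μ (0, 1) ∧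
       μ (0, 1) + μ (-1, 1) = μ (1, 0) + μ (1, -1)) :=
  stmt_4_general μ
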